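/- arXiv:1502.05002 — 7 statements merged into one kernel-verified Lean document; each statement's English description precedes it below -/
import Mathlib

section
/- Let R be a distance magma and S ⊆ R a sum-complete subset. If the induced operation ⊕_S on S is associative, then S satisfies the four-values condition in R: for all u₁, u₂, v₁, v₂ ∈ S, if there exists s ∈ S such that (s, u₁, u₂) and (s, v₁, v₂) are R-triangles, then there exists t ∈ S such that (t, u₁, v₁) and (t, u₂, v₂) are R-triangles. -/
/-- A distance magma: a totally ordered commutative unital magma `(R, ⊕, ≤, 0)`
with `r ≤ r ⊕ s` (positivity) and addition monotone in both arguments. -/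
structure DistanceMagma (R : Type*) [LinearOrder R] where
  add : R → R → R
  zero : R
  pos : ∀ r s : R, r ≤ add r s
  mono : ∀ r s t u : R, r ≤ t → s ≤ u → add r s ≤ add t u
  comm : ∀ r s : R, add r s = add s r
  unit : ∀ r : R, add r zero = r

/-- `(r, s, t)` is an `R`-triangle. -/
def RTriangle {R : Type*} [LinearOrder R] (M : DistanceMagma R) (r s t : R) : Prop :=
  r ≤ M.add s t ∧ s ≤ M.add r t ∧ t ≤ M.add r s

/-- If the induced operation `⊕_S` on a sum-complete subset `S` is associative, then
`S` satisfies the four-values condition in `R`. -/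
theorem assoc_implies_fourValues {R : Type*} [LinearOrder R] (M : DistanceMagma R)
    (S : Set R) (h0 : M.zero ∈ S) (addS : R → R → R)
    (hmax : ∀ r ∈ S, ∀ s ∈ S, IsGreatest {x | x ∈ S ∧ x ≤ M.add r s} (addS r s))
    (hassoc : ∀ r ∈ S, ∀ s ∈ S, ∀ t ∈ S, addS (addS r s) t = addS r (addS s t)) :
    ∀ u₁ ∈ S, ∀ u₂ ∈ S, ∀ v₁ ∈ S, ∀ v₂ ∈ S,
      (∃ s ∈ S, RTriangle M s u₁ u₂ ∧ RTriangle M s v₁ v₂) →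
      ∃ t ∈ S, RTriangle M t u₁ v₁ ∧ RTriangle M t u₂ v₂ := by
  have hmem : ∀ r ∈ S, ∀ s ∈ S, addS r s ∈ S := fun r hr s hs => (hmax r hr s hs).1.1
  have hle : ∀ r ∈ S, ∀ s ∈ S, addS r s ≤ M.add r s := fun r hr s hs => (hmax r hr s hs).1.2
  have hub : ∀ r ∈ S, ∀ s ∈ S, ∀ x ∈ S, x ≤ M.add r s → x ≤ addS r s :=
    fun r hr s hs x hx h => (hmax r hr s hs).2 ⟨hx, h⟩
  have hcomm : ∀ r ∈ S, ∀ s ∈ S, addS r s = addS s r := by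
    intro r hr s hs
    exact le_antisymm
      (hub s hs r hr _ (hmem r hr s hs) ((hle r hr s hs).trans (M.comm r s).le))
      (hub r hr s hs _ (hmem s hs r hr) ((hle s hs r hr).trans (M.comm s r).le))
  have hmono : ∀ r ∈ S, ∀ r' ∈ S, ∀ s ∈ S, r ≤ r' → addS r s ≤ addS r' s := by
    intro r hr r' hr' s hs h
    exact hub r' hr' s hs _ (hmem r hr s hs)
      ((hle r hr s hs).trans (M.mono _ _ _ _ h le_rfl))
  have hpos : ∀ r ∈ S, ∀ s ∈ S, r ≤ addS r s := fun r hr s hs => hub r hr s hs r hr (M.pos r s)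
  intro u₁ hu₁ u₂ hu₂ v₁ hv₁ v₂ hv₂ ⟨s, hs, ⟨h1, h2, h3⟩, ⟨k1, k2, k3⟩⟩
  -- key chains
  have hu₁v₁ := hmem u₁ hu₁ v₁ hv₁
  have hu₂v₂ := hmem u₂ hu₂ v₂ hv₂
  -- u₁ ≤ addS (addS u₂ v₂) v₁  and  v₁ ≤ addS (addS u₂ v₂) u₁
  have A1 : u₁ ≤ addS (addS u₂ v₂) v₁ := by
    have e1 : u₁ ≤ addS s u₂ := hub s hs u₂ hu₂ u₁ hu₁ h2
    have e2 : s ≤ addS v₁ v₂ := hub v₁ hv₁ v₂ hv₂ s hs k1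
    have e3 : addS s u₂ ≤ addS (addS v₁ v₂) u₂ :=
      hmono s hs _ (hmem v₁ hv₁ v₂ hv₂) u₂ hu₂ e2
    calc u₁ ≤ addS (addS v₁ v₂) u₂ := e1.trans e3
      _ = addS v₁ (addS v₂ u₂) := hassoc v₁ hv₁ v₂ hv₂ u₂ hu₂
      _ = addS v₁ (addS u₂ v₂) := by rw [hcomm v₂ hv₂ u₂ hu₂]
      _ = addS (addS u₂ v₂) v₁ := hcomm v₁ hv₁ _ hu₂v₂
  have A2 : v₁ ≤ addS (addS u₂ v₂) u₁ := by
    have e1 : v₁ ≤ addS s v₂ := hub s hs v₂ hv₂ v₁ hv₁ k2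
    have e2 : s ≤ addS u₁ u₂ := hub u₁ hu₁ u₂ hu₂ s hs h1
    have e3 : addS s v₂ ≤ addS (addS u₁ u₂) v₂ :=
      hmono s hs _ (hmem u₁ hu₁ u₂ hu₂) v₂ hv₂ e2
    calc v₁ ≤ addS (addS u₁ u₂) v₂ := e1.trans e3
      _ = addS u₁ (addS u₂ v₂) := hassoc u₁ hu₁ u₂ hu₂ v₂ hv₂
      _ = addS (addS u₂ v₂) u₁ := hcomm u₁ hu₁ _ hu₂v₂
  -- symmetric: u₂ ≤ addS (addS u₁ v₁) v₂  and  v₂ ≤ addS (addS u₁ v₁) u₂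
  have B1 : u₂ ≤ addS (addS u₁ v₁) v₂ := by
    have e1 : u₂ ≤ addS s u₁ := hub s hs u₁ hu₁ u₂ hu₂ h3
    have e2 : s ≤ addS v₁ v₂ := hub v₁ hv₁ v₂ hv₂ s hs k1
    have e3 : addS s u₁ ≤ addS (addS v₁ v₂) u₁ :=
      hmono s hs _ (hmem v₁ hv₁ v₂ hv₂) u₁ hu₁ e2
    calc u₂ ≤ addS (addS v₁ v₂) u₁ := e1.trans e3
      _ = addS v₁ (addS v₂ u₁) := hassoc v₁ hv₁ v₂ hv₂ u₁ hu₁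
      _ = addS v₁ (addS u₁ v₂) := by rw [hcomm v₂ hv₂ u₁ hu₁]
      _ = addS (addS u₁ v₂) v₁ := hcomm v₁ hv₁ _ (hmem u₁ hu₁ v₂ hv₂)
      _ = addS u₁ (addS v₂ v₁) := hassoc u₁ hu₁ v₂ hv₂ v₁ hv₁
      _ = addS u₁ (addS v₁ v₂) := by rw [hcomm v₂ hv₂ v₁ hv₁]
      _ = addS (addS u₁ v₁) v₂ := (hassoc u₁ hu₁ v₁ hv₁ v₂ hv₂).symm
  have B2 : v₂ ≤ addS (addS u₁ v₁) u₂ := by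
    have e1 : v₂ ≤ addS s v₁ := hub s hs v₁ hv₁ v₂ hv₂ k3
    have e2 : s ≤ addS u₁ u₂ := hub u₁ hu₁ u₂ hu₂ s hs h1
    have e3 : addS s v₁ ≤ addS (addS u₁ u₂) v₁ :=
      hmono s hs _ (hmem u₁ hu₁ u₂ hu₂) v₁ hv₁ e2
    calc v₂ ≤ addS (addS u₁ u₂) v₁ := e1.trans e3
      _ = addS u₁ (addS u₂ v₁) := hassoc u₁ hu₁ u₂ hu₂ v₁ hv₁
      _ = addS u₁ (addS v₁ u₂) := by rw [hcomm u₂ hu₂ v₁ hv₁]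
      _ = addS (addS u₁ v₁) u₂ := (hassoc u₁ hu₁ v₁ hv₁ u₂ hu₂).symm
  rcases le_total (addS u₂ v₂) (addS u₁ v₁) with hcase | hcase
  · refine ⟨addS u₂ v₂, hu₂v₂, ⟨hcase.trans (hle u₁ hu₁ v₁ hv₁),
      A1.trans (hle _ hu₂v₂ v₁ hv₁), A2.trans (hle _ hu₂v₂ u₁ hu₁)⟩,
      hle u₂ hu₂ v₂ hv₂,
      (hpos u₂ hu₂ v₂ hv₂).trans (M.pos _ v₂),
      ?_⟩
    have : v₂ ≤ addS u₂ v₂ := (hpos v₂ hv₂ u₂ hu₂).trans (hcomm v₂ hv₂ u₂ hu₂).le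
    exact this.trans (M.pos _ u₂)
  · refine ⟨addS u₁ v₁, hu₁v₁, ⟨hle u₁ hu₁ v₁ hv₁,
      (hpos u₁ hu₁ v₁ hv₁).trans (M.pos _ v₁), ?_⟩,
      hcase.trans (hle u₂ hu₂ v₂ hv₂),
      B1.trans (hle _ hu₁v₁ v₂ hv₂), B2.trans (hle _ hu₁v₁ u₂ hu₂)⟩
    have : v₁ ≤ addS u₁ v₁ := (hpos v₁ hv₁ u₁ hu₁).trans (hcomm v₁ hv₁ u₁ hu₁).le
    exact this.trans (M.pos _ u₁)
end

section
/- Let R be a distance magma and S ⊆ R a sum-complete subset. If S satisfies the four-values condition in R, then the induced operation ⊕_S is associative on S. -/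
/-- If a sum-complete subset `S` satisfies the four-values condition in `R`,
then the induced operation `⊕_S` is associative on `S`. -/
theorem fourValues_implies_assoc {R : Type*} [LinearOrder R] (M : DistanceMagma R)
    (S : Set R) (h0 : M.zero ∈ S) (addS : R → R → R)
    (hmax : ∀ r ∈ S, ∀ s ∈ S, IsGreatest {x | x ∈ S ∧ x ≤ M.add r s} (addS r s))
    (h4v : ∀ u₁ ∈ S, ∀ u₂ ∈ S, ∀ v₁ ∈ S, ∀ v₂ ∈ S,
      (∃ s ∈ S, RTriangle M s u₁ u₂ ∧ RTriangle M s v₁ v₂) →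
      ∃ t ∈ S, RTriangle M t u₁ v₁ ∧ RTriangle M t u₂ v₂) :
    ∀ r ∈ S, ∀ s ∈ S, ∀ t ∈ S, addS (addS r s) t = addS r (addS s t) := by
  -- basic facts about addS
  have memS : ∀ x ∈ S, ∀ y ∈ S, addS x y ∈ S := fun x hx y hy => (hmax x hx y hy).1.1
  have leAdd : ∀ x ∈ S, ∀ y ∈ S, addS x y ≤ M.add x y := fun x hx y hy => (hmax x hx y hy).1.2
  have leL : ∀ x ∈ S, ∀ y ∈ S, x ≤ addS x y := fun x hx y hy =>
    (hmax x hx y hy).2 ⟨hx, M.pos x y⟩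
  have leR : ∀ x ∈ S, ∀ y ∈ S, y ≤ addS x y := fun x hx y hy =>
    (hmax x hx y hy).2 ⟨hy, M.comm y x ▸ M.pos y x⟩
  -- triangle (addS x y, x, y)
  have triS : ∀ x ∈ S, ∀ y ∈ S, RTriangle M (addS x y) x y := fun x hx y hy =>
    ⟨leAdd x hx y hy, le_trans (leL x hx y hy) (M.pos (addS x y) y),
      le_trans (leR x hx y hy) (M.pos (addS x y) x)⟩
  -- triangle (addS x y, addS x y, whatever) style: (c, x, y) with c = addS x y works above
  have key : ∀ r ∈ S, ∀ s ∈ S, ∀ t ∈ S,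
      addS (addS r s) t ≤ addS r (addS s t) := by
    intro r hr s hs t ht
    have haS := memS r hr s hs
    have hcS := memS _ haS t ht
    have hbS := memS s hs t ht
    -- triangle (a, c, t) where a = addS r s, c = addS a t
    have triACT : RTriangle M (addS r s) (addS (addS r s) t) t := by
      refine ⟨le_trans (leL _ haS t ht) (M.pos _ t), leAdd _ haS t ht, ?_⟩
      exact le_trans (leR _ haS t ht) (M.comm (addS (addS r s) t) (addS r s) ▸
        M.pos (addS (addS r s) t) (addS r s))
    obtain ⟨d, hdS, hdrc, hdst⟩ := h4v r hr s hs _ hcS t ht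
      ⟨addS r s, haS, triS r hr s hs, triACT⟩
    -- d ≤ addS s t
    have hdb : d ≤ addS s t := (hmax s hs t ht).2 ⟨hdS, hdst.1⟩
    -- c ≤ r ⊕ d ≤ r ⊕ b
    have : addS (addS r s) t ≤ M.add r (addS s t) := by
      calc addS (addS r s) t ≤ M.add d r := hdrc.2.2
        _ ≤ M.add (addS s t) r := M.mono d r (addS s t) r hdb le_rfl
        _ = M.add r (addS s t) := M.comm _ _
    exact (hmax r hr _ hbS).2 ⟨hcS, this⟩
  intro r hr s hs t ht
  refine le_antisymm (key r hr s hs t ht) ?_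
  -- symmetric direction: use commutativity of addS
  have addS_comm : ∀ x ∈ S, ∀ y ∈ S, addS x y = addS y x := by
    intro x hx y hy
    refine le_antisymm ((hmax y hy x hx).2 ⟨(hmax x hx y hy).1.1, ?_⟩)
      ((hmax x hx y hy).2 ⟨(hmax y hy x hx).1.1, ?_⟩)
    · exact (M.comm x y) ▸ (hmax x hx y hy).1.2
    · exact (M.comm y x) ▸ (hmax y hy x hx).1.2
  have h := key t ht s hs r hr
  rw [addS_comm t ht s hs, addS_comm _ (memS s hs t ht) r hr,
    addS_comm t ht _ (memS s hs r hr), addS_comm s hs r hr] at h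
  exact h
end

section
/- Let R be a difference-complete distance magma whose operation ⊕ is associative. Then the map d(r, s) = |r ⊖ s| is an R-metric on R: d(r,s) = 0 iff r = s, d is symmetric, and d(r, t) ≤ d(r, s) ⊕ d(s, t) for all r, s, t. -/
/-- If a difference-complete distance magma is associative, then
`d(r,s) = |r ⊖ s|` is an `R`-metric on `R`. -/
theorem diff_is_metric_of_assoc {R : Type*} [LinearOrder R] (M : DistanceMagma R)
    (diff : R → R → R)
    (hdiff : ∀ r s : R, IsLeast {x : R | r ≤ M.add s x ∧ s ≤ M.add r x} (diff r s))
    (hassoc : ∀ r s t : R, M.add (M.add r s) t = M.add r (M.add s t)) :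
    (∀ r s : R, diff r s = M.zero ↔ r = s) ∧
    (∀ r s : R, diff r s = diff s r) ∧
    (∀ r s t : R, diff r t ≤ M.add (diff r s) (diff s t)) := by
  have hzero : ∀ x : R, M.zero ≤ x := by
    intro x
    have := M.pos M.zero x
    rwa [M.comm, M.unit] at this
  refine ⟨?_, ?_, ?_⟩
  · intro r s
    constructor
    · intro h
      have h1 := (hdiff r s).1
      rw [h] at h1
      obtain ⟨h2, h3⟩ := h1
      rw [M.unit] at h2 h3
      exact le_antisymm h2 h3
    · rintro rfl
      refine le_antisymm ((hdiff r r).2 ?_) (hzero _)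
      exact ⟨by rw [M.unit], by rw [M.unit]⟩
  · intro r s
    refine le_antisymm ((hdiff r s).2 ?_) ((hdiff s r).2 ?_)
    · exact ⟨(hdiff s r).1.2, (hdiff s r).1.1⟩
    · exact ⟨(hdiff r s).1.2, (hdiff r s).1.1⟩
  · intro r s t
    apply (hdiff r t).2
    obtain ⟨h1, h2⟩ := (hdiff r s).1
    obtain ⟨h3, h4⟩ := (hdiff s t).1
    constructor
    · calc r ≤ M.add s (diff r s) := h1
        _ ≤ M.add (M.add t (diff s t)) (diff r s) := M.mono _ _ _ _ h3 le_rfl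
        _ = M.add t (M.add (diff r s) (diff s t)) := by
            rw [hassoc, M.comm (diff s t)]
    · calc t ≤ M.add s (diff s t) := h4
        _ ≤ M.add (M.add r (diff r s)) (diff s t) := M.mono _ _ _ _ h2 le_rfl
        _ = M.add r (M.add (diff r s) (diff s t)) := hassoc _ _ _
end

section
/- Let R be a difference-complete distance magma. If d(r,s) = |r ⊖ s| defines an R-metric on R (i.e., satisfies the triangle inequality d(r,t) ≤ d(r,s) ⊕ d(s,t)), then ⊕ is associative. -/
/-- If `d(r,s) = |r ⊖ s|` satisfies the triangle inequality on a difference-complete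
distance magma, then `⊕` is associative. -/
theorem assoc_of_diff_metric {R : Type*} [LinearOrder R] (M : DistanceMagma R)
    (diff : R → R → R)
    (hdiff : ∀ r s : R, IsLeast {x : R | r ≤ M.add s x ∧ s ≤ M.add r x} (diff r s))
    (htri : ∀ r s t : R, diff r t ≤ M.add (diff r s) (diff s t)) :
    ∀ r s t : R, M.add (M.add r s) t = M.add r (M.add s t) := by
  -- key: diff (x⊕y) x ≤ y
  have hd : ∀ x y : R, diff (M.add x y) x ≤ y := by
    intro x y
    refine (hdiff (M.add x y) x).2 ⟨le_refl _, ?_⟩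
    exact le_trans (M.pos x y) (M.pos (M.add x y) y)
  -- key inequality: (x⊕y)⊕z ≤ x⊕(y⊕z)
  have key : ∀ x y z : R, M.add (M.add x y) z ≤ M.add x (M.add y z) := by
    intro x y z
    have h1 : diff (M.add (M.add x y) z) (M.add x y) ≤ z := hd (M.add x y) z
    have h2 : diff (M.add x y) x ≤ y := hd x y
    have h3 : diff (M.add (M.add x y) z) x ≤ M.add y z := by
      calc diff (M.add (M.add x y) z) x
          ≤ M.add (diff (M.add (M.add x y) z) (M.add x y)) (diff (M.add x y) x) :=
            htri _ _ _
        _ ≤ M.add z y := M.mono _ _ _ _ h1 h2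
        _ = M.add y z := M.comm z y
    calc M.add (M.add x y) z
        ≤ M.add x (diff (M.add (M.add x y) z) x) := ((hdiff _ x).1).1
      _ ≤ M.add x (M.add y z) := M.mono _ _ _ _ (le_refl x) h3
  intro r s t
  apply le_antisymm (key r s t)
  calc M.add r (M.add s t) = M.add (M.add t s) r := by rw [M.comm, M.comm s t]
    _ ≤ M.add t (M.add s r) := key t s r
    _ = M.add (M.add r s) t := by rw [M.comm s r, M.comm t (M.add r s)]
end

section
/- Let R be a difference-complete distance magma. For each r ∈ R, the map f(x) = x ⊕ r is upper semicontinuous: for all x₀ ∈ R and s ∈ R with f(x₀) < s, there exists t ∈ R with x₀ < t such that f(x) < s for all x < t. -/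
namespace DistanceMagma

variable {R : Type*} [LinearOrder R] (M : DistanceMagma R) {r s x d : R}

theorem add_le_add_left {s u : R} (h : s ≤ u) (r : R) : M.add r s ≤ M.add r u :=
  M.mono r s r u le_rfl h

theorem le_add_left (r s : R) : r ≤ M.add s r :=
  (M.pos r s).trans_eq (M.comm r s)

theorem lt_diff_of_add_lt (hd : IsLeast {x | s ≤ M.add r x ∧ r ≤ M.add s x} d)
    (h : M.add x r < s) : x < d := by
  by_contra! hdx
  refine h.not_ge ?_
  calc s ≤ M.add r d := hd.1.1
    _ ≤ M.add r x := M.add_le_add_left hdx r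
    _ = M.add x r := M.comm r x

theorem add_lt_of_lt_diff (hd : IsLeast {x | s ≤ M.add r x ∧ r ≤ M.add s x} d)
    (hrs : r ≤ s) (hx : x < d) : M.add x r < s := by
  by_contra! hsx
  exact hx.not_ge (hd.2 ⟨hsx.trans_eq (M.comm x r), hrs.trans (M.pos s x)⟩)

theorem add_lt_iff_lt_diff (hd : IsLeast {x | s ≤ M.add r x ∧ r ≤ M.add s x} d)
    (hrs : r ≤ s) : M.add x r < s ↔ x < d :=
  ⟨M.lt_diff_of_add_lt hd, M.add_lt_of_lt_diff hd hrs⟩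

end DistanceMagma

/-- In a difference-complete distance magma, the map `x ↦ x ⊕ r` is upper
semicontinuous. -/
theorem add_upperSemicontinuous {R : Type*} [LinearOrder R] (M : DistanceMagma R)
    (diff : R → R → R)
    (hdiff : ∀ r s : R, IsLeast {x : R | r ≤ M.add s x ∧ s ≤ M.add r x} (diff r s)) :
    ∀ r x₀ s : R, M.add x₀ r < s → ∃ t : R, x₀ < t ∧ ∀ x : R, x < t → M.add x r < s := by
  intro r x₀ s h
  have hrs : r ≤ s := (M.le_add_left r x₀).trans h.le
  have key := fun x ↦ M.add_lt_iff_lt_diff (x := x) (hdiff s r) hrs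
  exact ⟨diff s r, (key x₀).1 h, fun x ↦ (key x).2⟩
end

section
/- Let R be a distance magma in which ⊕ is associative, and let A, B be finite R-metric spaces with nonempty intersection on which their metrics agree. Then the free amalgam A ⊗ B, given by d_C(x,y) = min_{z ∈ A ∩ B} (d_A(x,z) ⊕ d_B(z,y)) for x ∈ A \ B and y ∈ B \ A, and by d_A, d_B on A and B respectively, is an R-metric space. -/
/-- `d` is an `R`-metric on the finite set `A`. -/
def IsMetricOn {R : Type*} [LinearOrder R] {X : Type*} (M : DistanceMagma R)
    (A : Finset X) (d : X → X → R) : Prop :=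
  (∀ x ∈ A, ∀ y ∈ A, (d x y = M.zero ↔ x = y)) ∧
  (∀ x ∈ A, ∀ y ∈ A, d x y = d y x) ∧
  (∀ x ∈ A, ∀ y ∈ A, ∀ z ∈ A, d x z ≤ M.add (d x y) (d y z))

/-- The free amalgam of two metrics over their common intersection. -/
noncomputable def amalg {R : Type*} [LinearOrder R] {X : Type*} [DecidableEq X]
    (M : DistanceMagma R) (A B : Finset X) (dA dB : X → X → R)
    (h : (A ∩ B).Nonempty) (x y : X) : R :=
  if x ∈ A ∧ y ∈ A then dA x y
  else if x ∈ B ∧ y ∈ B then dB x y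
  else if x ∈ A then
    ((A ∩ B).image fun z => M.add (dA x z) (dB z y)).min'
      (h.image (fun z => M.add (dA x z) (dB z y)))
  else
    ((A ∩ B).image fun z => M.add (dB x z) (dA z y)).min'
      (h.image (fun z => M.add (dB x z) (dA z y)))

/-- If `⊕` is associative, the free amalgam of two finite `R`-metric spaces agreeing
on their nonempty intersection is an `R`-metric space. -/
theorem freeAmalgam_isMetric {R : Type*} [LinearOrder R] {X : Type*} [DecidableEq X]
    (M : DistanceMagma R)
    (hassoc : ∀ r s t : R, M.add (M.add r s) t = M.add r (M.add s t))
    (A B : Finset X) (dA dB : X → X → R) (h : (A ∩ B).Nonempty)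
    (hdA : IsMetricOn M A dA) (hdB : IsMetricOn M B dB)
    (hagree : ∀ x ∈ A ∩ B, ∀ y ∈ A ∩ B, dA x y = dB x y) :
    IsMetricOn M (A ∪ B) (amalg M A B dA dB h) := by
  obtain ⟨hA0, hAs, hAt⟩ := hdA
  obtain ⟨hB0, hBs, hBt⟩ := hdB
  set d := amalg M A B dA dB h with hd
  have hzero_le : ∀ r : R, M.zero ≤ r := by
    intro r
    have := M.pos M.zero r
    rwa [M.comm, M.unit] at this
  have hzadd : ∀ r : R, M.add M.zero r = r := by
    intro r; rw [M.comm, M.unit]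
  -- evaluation lemmas
  have eqA : ∀ x ∈ A, ∀ y ∈ A, d x y = dA x y := by
    intro x hx y hy; simp [hd, amalg, hx, hy]
  have eqB : ∀ x ∈ B, ∀ y ∈ B, d x y = dB x y := by
    intro x hx y hy
    by_cases hxA : x ∈ A <;> by_cases hyA : y ∈ A
    · rw [eqA x hxA y hyA,
        hagree x (Finset.mem_inter.mpr ⟨hxA, hx⟩) y (Finset.mem_inter.mpr ⟨hyA, hy⟩)]
    all_goals simp [hd, amalg, hx, hy, hxA, hyA]
  have leAB : ∀ x ∈ A, ∀ y ∈ B, ∀ w ∈ A ∩ B, d x y ≤ M.add (dA x w) (dB w y) := by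
    intro x hx y hy w hw
    obtain ⟨hwA, hwB⟩ := Finset.mem_inter.mp hw
    by_cases hyA : y ∈ A
    · rw [eqA x hx y hyA]
      have := hAt x hx w hwA y hyA
      rwa [hagree w hw y (Finset.mem_inter.mpr ⟨hyA, hy⟩)] at this
    by_cases hxB : x ∈ B
    · rw [eqB x hxB y hy]
      have := hBt x hxB w hwB y hy
      rwa [← hagree x (Finset.mem_inter.mpr ⟨hx, hxB⟩) w hw] at this
    · have hc1 : ¬(x ∈ A ∧ y ∈ A) := fun hc => hyA hc.2
      have hc2 : ¬(x ∈ B ∧ y ∈ B) := fun hc => hxB hc.1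
      rw [hd]
      show (if x ∈ A ∧ y ∈ A then dA x y else _) ≤ _
      rw [if_neg hc1, if_neg hc2, if_pos hx]
      exact Finset.min'_le _ _ (Finset.mem_image_of_mem _ hw)
  have leBA : ∀ x ∈ B, ∀ y ∈ A, ∀ w ∈ A ∩ B, d x y ≤ M.add (dB x w) (dA w y) := by
    intro x hx y hy w hw
    obtain ⟨hwA, hwB⟩ := Finset.mem_inter.mp hw
    by_cases hxA : x ∈ A
    · rw [eqA x hxA y hy]
      have := hAt x hxA w hwA y hy
      rwa [hagree x (Finset.mem_inter.mpr ⟨hxA, hx⟩) w hw] at this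
    by_cases hyB : y ∈ B
    · rw [eqB x hx y hyB]
      have := hBt x hx w hwB y hyB
      rwa [← hagree w hw y (Finset.mem_inter.mpr ⟨hy, hyB⟩)] at this
    · have hc1 : ¬(x ∈ A ∧ y ∈ A) := fun hc => hxA hc.1
      have hc2 : ¬(x ∈ B ∧ y ∈ B) := fun hc => hyB hc.2
      rw [hd]
      show (if x ∈ A ∧ y ∈ A then dA x y else _) ≤ _
      rw [if_neg hc1, if_neg hc2, if_neg hxA]
      exact Finset.min'_le _ _ (Finset.mem_image_of_mem _ hw)
  have geAB : ∀ x ∈ A, ∀ y ∈ B, ∃ w ∈ A ∩ B, d x y = M.add (dA x w) (dB w y) := by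
    intro x hx y hy
    by_cases hyA : y ∈ A
    · refine ⟨y, Finset.mem_inter.mpr ⟨hyA, hy⟩, ?_⟩
      rw [eqA x hx y hyA, (hB0 y hy y hy).mpr rfl, M.unit]
    by_cases hxB : x ∈ B
    · refine ⟨x, Finset.mem_inter.mpr ⟨hx, hxB⟩, ?_⟩
      rw [eqB x hxB y hy, (hA0 x hx x hx).mpr rfl, hzadd]
    · have hc1 : ¬(x ∈ A ∧ y ∈ A) := fun hc => hyA hc.2
      have hc2 : ¬(x ∈ B ∧ y ∈ B) := fun hc => hxB hc.1
      have hm := Finset.min'_mem ((A ∩ B).image fun z => M.add (dA x z) (dB z y))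
        (h.image _)
      rw [Finset.mem_image] at hm
      obtain ⟨w, hw, hweq⟩ := hm
      refine ⟨w, hw, ?_⟩
      rw [hd]
      show (if x ∈ A ∧ y ∈ A then dA x y else _) = _
      rw [if_neg hc1, if_neg hc2, if_pos hx, ← hweq]
  have geBA : ∀ x ∈ B, ∀ y ∈ A, ∃ w ∈ A ∩ B, d x y = M.add (dB x w) (dA w y) := by
    intro x hx y hy
    by_cases hxA : x ∈ A
    · refine ⟨x, Finset.mem_inter.mpr ⟨hxA, hx⟩, ?_⟩
      rw [eqA x hxA y hy, (hB0 x hx x hx).mpr rfl, hzadd]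
    by_cases hyB : y ∈ B
    · refine ⟨y, Finset.mem_inter.mpr ⟨hy, hyB⟩, ?_⟩
      rw [eqB x hx y hyB, (hA0 y hy y hy).mpr rfl, M.unit]
    · have hc1 : ¬(x ∈ A ∧ y ∈ A) := fun hc => hxA hc.1
      have hc2 : ¬(x ∈ B ∧ y ∈ B) := fun hc => hyB hc.2
      have hm := Finset.min'_mem ((A ∩ B).image fun z => M.add (dB x z) (dA z y))
        (h.image _)
      rw [Finset.mem_image] at hm
      obtain ⟨w, hw, hweq⟩ := hm
      refine ⟨w, hw, ?_⟩
      rw [hd]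
      show (if x ∈ A ∧ y ∈ A then dA x y else _) = _
      rw [if_neg hc1, if_neg hc2, if_neg hxA, ← hweq]
  -- zero
  have dzero : ∀ x ∈ A ∪ B, ∀ y ∈ A ∪ B, (d x y = M.zero ↔ x = y) := by
    intro x hx y hy
    rcases Finset.mem_union.mp hx with hxA | hxB <;>
      rcases Finset.mem_union.mp hy with hyA | hyB
    · rw [eqA x hxA y hyA]; exact hA0 x hxA y hyA
    · constructor
      · intro h0
        obtain ⟨w, hw, hweq⟩ := geAB x hxA y hyB
        obtain ⟨hwA, hwB⟩ := Finset.mem_inter.mp hw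
        have h1 : dA x w = M.zero := le_antisymm
          (by rw [← h0, hweq]; exact M.pos _ _) (hzero_le _)
        have h2 : dB w y = M.zero := le_antisymm
          (by rw [← h0, hweq, M.comm]; exact M.pos _ _) (hzero_le _)
        have e1 := (hA0 x hxA w hwA).mp h1
        have e2 := (hB0 w hwB y hyB).mp h2
        exact e1.trans e2
      · rintro rfl
        rw [eqA x hxA x hxA]; exact (hA0 x hxA x hxA).mpr rfl
    · constructor
      · intro h0
        obtain ⟨w, hw, hweq⟩ := geBA x hxB y hyA
        obtain ⟨hwA, hwB⟩ := Finset.mem_inter.mp hw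
        have h1 : dB x w = M.zero := le_antisymm
          (by rw [← h0, hweq]; exact M.pos _ _) (hzero_le _)
        have h2 : dA w y = M.zero := le_antisymm
          (by rw [← h0, hweq, M.comm]; exact M.pos _ _) (hzero_le _)
        have e1 := (hB0 x hxB w hwB).mp h1
        have e2 := (hA0 w hwA y hyA).mp h2
        exact e1.trans e2
      · rintro rfl
        rw [eqB x hxB x hxB]; exact (hB0 x hxB x hxB).mpr rfl
    · rw [eqB x hxB y hyB]; exact hB0 x hxB y hyB
  -- symmetry
  have dsymm : ∀ x ∈ A ∪ B, ∀ y ∈ A ∪ B, d x y = d y x := by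
    intro x hx y hy
    rcases Finset.mem_union.mp hx with hxA | hxB <;>
      rcases Finset.mem_union.mp hy with hyA | hyB
    · rw [eqA x hxA y hyA, eqA y hyA x hxA]; exact hAs x hxA y hyA
    · apply le_antisymm
      · obtain ⟨w, hw, hweq⟩ := geBA y hyB x hxA
        obtain ⟨hwA, hwB⟩ := Finset.mem_inter.mp hw
        rw [hweq, M.comm, hAs w hwA x hxA, hBs y hyB w hwB]
        exact leAB x hxA y hyB w hw
      · obtain ⟨w, hw, hweq⟩ := geAB x hxA y hyB
        obtain ⟨hwA, hwB⟩ := Finset.mem_inter.mp hw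
        rw [hweq, M.comm, hBs w hwB y hyB, hAs x hxA w hwA]
        exact leBA y hyB x hxA w hw
    · apply le_antisymm
      · obtain ⟨w, hw, hweq⟩ := geAB y hyA x hxB
        obtain ⟨hwA, hwB⟩ := Finset.mem_inter.mp hw
        rw [hweq, M.comm, hBs w hwB x hxB, hAs y hyA w hwA]
        exact leBA x hxB y hyA w hw
      · obtain ⟨w, hw, hweq⟩ := geBA x hxB y hyA
        obtain ⟨hwA, hwB⟩ := Finset.mem_inter.mp hw
        rw [hweq, M.comm, hAs w hwA y hyA, hBs x hxB w hwB]
        exact leAB y hyA x hxB w hw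
    · rw [eqB x hxB y hyB, eqB y hyB x hxB]; exact hBs x hxB y hyB
  -- a chain lemma for the four-term associativity juggling
  have chain4 : ∀ a b c e m n f : R, m ≤ M.add b c → n ≤ M.add a m → f ≤ M.add n e →
      f ≤ M.add (M.add a b) (M.add c e) := by
    intro a b c e m n f h1 h2 h3
    calc f ≤ M.add n e := h3
      _ ≤ M.add (M.add a m) e := M.mono _ _ _ _ h2 le_rfl
      _ ≤ M.add (M.add a (M.add b c)) e :=
          M.mono _ _ _ _ (M.mono _ _ _ _ le_rfl h1) le_rfl
      _ = M.add (M.add a b) (M.add c e) := by rw [← hassoc a b c, hassoc (M.add a b)]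
  -- triangle inequality, split by endpoints
  have triAA : ∀ x ∈ A, ∀ y ∈ A ∪ B, ∀ z ∈ A, d x z ≤ M.add (d x y) (d y z) := by
    intro x hx y hy z hz
    rw [eqA x hx z hz]
    rcases Finset.mem_union.mp hy with hyA | hyB
    · rw [eqA x hx y hyA, eqA y hyA z hz]; exact hAt x hx y hyA z hz
    · obtain ⟨w1, hw1, e1⟩ := geAB x hx y hyB
      obtain ⟨w2, hw2, e2⟩ := geBA y hyB z hz
      obtain ⟨hw1A, hw1B⟩ := Finset.mem_inter.mp hw1
      obtain ⟨hw2A, hw2B⟩ := Finset.mem_inter.mp hw2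
      rw [e1, e2]
      refine chain4 _ _ _ _ (dA w1 w2) (dA x w2) _ ?_ ?_ ?_
      · rw [hagree w1 hw1 w2 hw2]; exact hBt w1 hw1B y hyB w2 hw2B
      · exact hAt x hx w1 hw1A w2 hw2A
      · exact hAt x hx w2 hw2A z hz
  have triBB : ∀ x ∈ B, ∀ y ∈ A ∪ B, ∀ z ∈ B, d x z ≤ M.add (d x y) (d y z) := by
    intro x hx y hy z hz
    rw [eqB x hx z hz]
    rcases Finset.mem_union.mp hy with hyA | hyB
    · obtain ⟨w1, hw1, e1⟩ := geBA x hx y hyA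
      obtain ⟨w2, hw2, e2⟩ := geAB y hyA z hz
      obtain ⟨hw1A, hw1B⟩ := Finset.mem_inter.mp hw1
      obtain ⟨hw2A, hw2B⟩ := Finset.mem_inter.mp hw2
      rw [e1, e2]
      refine chain4 _ _ _ _ (dB w1 w2) (dB x w2) _ ?_ ?_ ?_
      · rw [← hagree w1 hw1 w2 hw2]; exact hAt w1 hw1A y hyA w2 hw2A
      · exact hBt x hx w1 hw1B w2 hw2B
      · exact hBt x hx w2 hw2B z hz
    · rw [eqB x hx y hyB, eqB y hyB z hz]; exact hBt x hx y hyB z hz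
  have triAB : ∀ x ∈ A, ∀ y ∈ A ∪ B, ∀ z ∈ B, d x z ≤ M.add (d x y) (d y z) := by
    intro x hx y hy z hz
    rcases Finset.mem_union.mp hy with hyA | hyB
    · obtain ⟨w, hw, e⟩ := geAB y hyA z hz
      rw [eqA x hx y hyA, e]
      calc d x z ≤ M.add (dA x w) (dB w z) := leAB x hx z hz w hw
        _ ≤ M.add (M.add (dA x y) (dA y w)) (dB w z) :=
            M.mono _ _ _ _ (hAt x hx y hyA w (Finset.mem_inter.mp hw).1) le_rfl
        _ = M.add (dA x y) (M.add (dA y w) (dB w z)) := hassoc _ _ _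
    · obtain ⟨w, hw, e⟩ := geAB x hx y hyB
      rw [eqB y hyB z hz, e]
      calc d x z ≤ M.add (dA x w) (dB w z) := leAB x hx z hz w hw
        _ ≤ M.add (dA x w) (M.add (dB w y) (dB y z)) :=
            M.mono _ _ _ _ le_rfl (hBt w (Finset.mem_inter.mp hw).2 y hyB z hz)
        _ = M.add (M.add (dA x w) (dB w y)) (dB y z) := (hassoc _ _ _).symm
  have triBA : ∀ x ∈ B, ∀ y ∈ A ∪ B, ∀ z ∈ A, d x z ≤ M.add (d x y) (d y z) := by
    intro x hx y hy z hz
    rcases Finset.mem_union.mp hy with hyA | hyB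
    · obtain ⟨w, hw, e⟩ := geBA x hx y hyA
      rw [eqA y hyA z hz, e]
      calc d x z ≤ M.add (dB x w) (dA w z) := leBA x hx z hz w hw
        _ ≤ M.add (dB x w) (M.add (dA w y) (dA y z)) :=
            M.mono _ _ _ _ le_rfl (hAt w (Finset.mem_inter.mp hw).1 y hyA z hz)
        _ = M.add (M.add (dB x w) (dA w y)) (dA y z) := (hassoc _ _ _).symm
    · obtain ⟨w, hw, e⟩ := geBA y hyB z hz
      rw [eqB x hx y hyB, e]
      calc d x z ≤ M.add (dB x w) (dA w z) := leBA x hx z hz w hw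
        _ ≤ M.add (M.add (dB x y) (dB y w)) (dA w z) :=
            M.mono _ _ _ _ (hBt x hx y hyB w (Finset.mem_inter.mp hw).2) le_rfl
        _ = M.add (dB x y) (M.add (dB y w) (dA w z)) := hassoc _ _ _
  refine ⟨dzero, dsymm, ?_⟩
  intro x hx y hy z hz
  rcases Finset.mem_union.mp hx with hxA | hxB <;>
    rcases Finset.mem_union.mp hz with hzA | hzB
  · exact triAA x hxA y hy z hzA
  · exact triAB x hxA y hy z hzB
  · exact triBA x hxB y hy z hzA
  · exact triBB x hxB y hy z hzB
end

section
/- Let R = (R, ⊕, ≤, 0) be a distance magma and d an R-metric on a set A. Suppose f, g : A → R are Katětov maps on (A, d), meaning for all x, y ∈ A, the triple (d(x,y), f(x), f(y)) satisfies the triangle inequalities d(x,y) ≤ f(x) ⊕ f(y), f(x) ≤ d(x,y) ⊕ f(y), f(y) ≤ d(x,y) ⊕ f(x), and similarly for g. If ⊕ is associative and we extend d to A ∪ {z_f, z_g} (two new points) by d(x, z_f) = f(x), d(x, z_g) = g(x), and d(z_f, z_g) = min_{x ∈ A} (f(x) ⊕ g(x)) (assuming A is finite and nonempty), then the extension is an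 R-metric. -/
/-- Extending a finite `R`-metric space by two new points `z_f, z_g` corresponding to
positive Katětov maps `f, g`, with `d(z_f, z_g) = min_{a ∈ A} (f a ⊕ g a)`, yields an
`R`-metric (assuming `⊕` is associative). -/
theorem katetov_two_point_extension {R : Type*} [LinearOrder R] {X : Type*} [DecidableEq X]
    (M : DistanceMagma R)
    (hassoc : ∀ r s t : R, M.add (M.add r s) t = M.add r (M.add s t))
    (A : Finset X) (hA : A.Nonempty) (d : X → X → R) (hd : IsMetricOn M A d)
    (f g : X → R)
    (hf : ∀ x ∈ A, ∀ y ∈ A, RTriangle M (d x y) (f x) (f y))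
    (hg : ∀ x ∈ A, ∀ y ∈ A, RTriangle M (d x y) (g x) (g y))
    (hfpos : ∀ x ∈ A, M.zero < f x) (hgpos : ∀ x ∈ A, M.zero < g x)
    (zf zg : X) (hzf : zf ∉ A) (hzg : zg ∉ A) (hne : zf ≠ zg) :
    IsMetricOn M (insert zf (insert zg A))
      (fun x y =>
        if x = zf then
          (if y = zf then M.zero
           else if y = zg then
             ((A.image fun a => M.add (f a) (g a)).min'
               (hA.image (fun a => M.add (f a) (g a))))
           else f y)
        else if x = zg then
          (if y = zf then
             ((A.image fun a => M.add (f a) (g a)).min'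
               (hA.image (fun a => M.add (f a) (g a))))
           else if y = zg then M.zero
           else g y)
        else
          (if y = zf then f x else if y = zg then g x else d x y)) := by
  obtain ⟨hdz, hdsymm, hdtri⟩ := hd
  set m : R := ((A.image fun a => M.add (f a) (g a)).min'
      (hA.image (fun a => M.add (f a) (g a))))
  have hzero_le : ∀ r : R, M.zero ≤ r := fun r => by
    have h := M.pos M.zero r
    rw [M.comm, M.unit] at h; exact h
  have hzadd : ∀ r : R, M.add M.zero r = r := fun r => by rw [M.comm, M.unit]
  have hunit : ∀ r : R, M.add r M.zero = r := M.unit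
  obtain ⟨a₀, ha₀, hma⟩ : ∃ a ∈ A, M.add (f a) (g a) = m := by
    have h := Finset.min'_mem (A.image fun a => M.add (f a) (g a))
      (hA.image (fun a => M.add (f a) (g a)))
    rw [Finset.mem_image] at h
    exact h
  have hmle : ∀ a ∈ A, m ≤ M.add (f a) (g a) := fun a ha =>
    Finset.min'_le _ _ (Finset.mem_image_of_mem _ ha)
  have hmpos : M.zero < m := by
    rw [← hma]; exact lt_of_lt_of_le (hfpos a₀ ha₀) (M.pos _ _)
  have key1 : ∀ x ∈ A, f x ≤ M.add m (g x) := by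
    intro x hx
    have h1 : f x ≤ M.add (d x a₀) (f a₀) := (hf x hx a₀ ha₀).2.1
    have h2 : d x a₀ ≤ M.add (g x) (g a₀) := (hg x hx a₀ ha₀).1
    calc f x ≤ M.add (M.add (g x) (g a₀)) (f a₀) := le_trans h1 (M.mono _ _ _ _ h2 le_rfl)
      _ = M.add m (g x) := by rw [hassoc, M.comm (g a₀), hma, M.comm]
  have key2 : ∀ x ∈ A, g x ≤ M.add m (f x) := by
    intro x hx
    have h1 : g x ≤ M.add (d x a₀) (g a₀) := (hg x hx a₀ ha₀).2.1
    have h2 : d x a₀ ≤ M.add (f x) (f a₀) := (hf x hx a₀ ha₀).1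
    calc g x ≤ M.add (M.add (f x) (f a₀)) (g a₀) := le_trans h1 (M.mono _ _ _ _ h2 le_rfl)
      _ = M.add m (f x) := by rw [hassoc, hma, M.comm]
  have hmem : ∀ x ∈ insert zf (insert zg A), x = zf ∨ x = zg ∨ x ∈ A := by
    intro x hx
    rcases Finset.mem_insert.1 hx with h | h
    · exact Or.inl h
    · rcases Finset.mem_insert.1 h with h | h
      · exact Or.inr (Or.inl h)
      · exact Or.inr (Or.inr h)
  refine ⟨?_, ?_, ?_⟩
  · intro x hx y hy
    rcases hmem x hx with hxe | hxe | hx' <;> rcases hmem y hy with hye | hye | hy'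
    · simp [hxe, hye]
    · simp [hxe, hye, hne, Ne.symm hne, hmpos.ne', hmpos.ne]
    · have h3 : y ≠ zf := fun h => hzf (h ▸ hy')
      have h4 : y ≠ zg := fun h => hzg (h ▸ hy')
      simp [hxe, h3, h4, Ne.symm h3, (hfpos y hy').ne', (hfpos y hy').ne]
    · simp [hxe, hye, hne, Ne.symm hne, hmpos.ne', hmpos.ne]
    · simp [hxe, hye, hne, Ne.symm hne]
    · have h3 : y ≠ zf := fun h => hzf (h ▸ hy')
      have h4 : y ≠ zg := fun h => hzg (h ▸ hy')
      simp [hxe, h3, h4, Ne.symm h4, hne, Ne.symm hne, (hgpos y hy').ne', (hgpos y hy').ne]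
    · have h1 : x ≠ zf := fun h => hzf (h ▸ hx')
      have h2 : x ≠ zg := fun h => hzg (h ▸ hx')
      simp [hye, h1, h2, hne, Ne.symm hne, (hfpos x hx').ne', (hfpos x hx').ne]
    · have h1 : x ≠ zf := fun h => hzf (h ▸ hx')
      have h2 : x ≠ zg := fun h => hzg (h ▸ hx')
      simp [hye, h1, h2, hne, Ne.symm hne, (hgpos x hx').ne', (hgpos x hx').ne]
    · have h1 : x ≠ zf := fun h => hzf (h ▸ hx')
      have h2 : x ≠ zg := fun h => hzg (h ▸ hx')
      have h3 : y ≠ zf := fun h => hzf (h ▸ hy')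
      have h4 : y ≠ zg := fun h => hzg (h ▸ hy')
      simp only [if_neg h1, if_neg h2, if_neg h3, if_neg h4]
      exact hdz x hx' y hy'
  · intro x hx y hy
    rcases hmem x hx with hxe | hxe | hx' <;> rcases hmem y hy with hye | hye | hy'
    · simp [hxe, hye]
    · simp [hxe, hye, hne, Ne.symm hne]
    · have h3 : y ≠ zf := fun h => hzf (h ▸ hy')
      have h4 : y ≠ zg := fun h => hzg (h ▸ hy')
      simp [hxe, h3, h4]
    · simp [hxe, hye, hne, Ne.symm hne]
    · simp [hxe, hye]
    · have h3 : y ≠ zf := fun h => hzf (h ▸ hy')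
      have h4 : y ≠ zg := fun h => hzg (h ▸ hy')
      simp [hxe, h3, h4, hne, Ne.symm hne]
    · have h1 : x ≠ zf := fun h => hzf (h ▸ hx')
      have h2 : x ≠ zg := fun h => hzg (h ▸ hx')
      simp [hye, h1, h2]
    · have h1 : x ≠ zf := fun h => hzf (h ▸ hx')
      have h2 : x ≠ zg := fun h => hzg (h ▸ hx')
      simp [hye, h1, h2, hne, Ne.symm hne]
    · have h1 : x ≠ zf := fun h => hzf (h ▸ hx')
      have h2 : x ≠ zg := fun h => hzg (h ▸ hx')
      have h3 : y ≠ zf := fun h => hzf (h ▸ hy')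
      have h4 : y ≠ zg := fun h => hzg (h ▸ hy')
      simp only [if_neg h1, if_neg h2, if_neg h3, if_neg h4]
      exact hdsymm x hx' y hy'
  · intro x hx y hy z hz
    rcases hmem x hx with hxe | hxe | hx' <;> rcases hmem y hy with hye | hye | hy' <;>
        rcases hmem z hz with hze | hze | hz' <;>
      (try have nx1 : x ≠ zf := fun h => hzf (h ▸ hx')) <;>
      (try have nx2 : x ≠ zg := fun h => hzg (h ▸ hx')) <;>
      (try have ny1 : y ≠ zf := fun h => hzf (h ▸ hy')) <;>
      (try have ny2 : y ≠ zg := fun h => hzg (h ▸ hy')) <;>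
      (try have nz1 : z ≠ zf := fun h => hzf (h ▸ hz')) <;>
      (try have nz2 : z ≠ zg := fun h => hzg (h ▸ hz')) <;>
      (try simp only [hxe]) <;> (try simp only [hye]) <;> (try simp only [hze]) <;>
      (try simp [*, hne, Ne.symm hne]) <;>
    first
      | rfl
      | exact hzero_le _
      | exact M.pos _ _
      | exact le_of_eq (hzadd _).symm
      | exact le_of_eq (hunit _).symm
      | exact key1 _ hz'
      | exact key2 _ hz'
      | exact hmle _ hy'
      | exact (hf x hx' z hz').1
      | exact (hg x hx' z hz').1
      | exact (hf x hx' y hy').2.1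
      | exact (hg x hx' y hy').2.1
      | exact hdtri x hx' y hy' z hz'
      | (rw [M.comm]
         first
          | exact hmle _ hy'
          | exact key1 _ hx'
          | exact key2 _ hx'
          | exact (hf y hy' z hz').2.2
          | exact (hg y hy' z hz').2.2)
end
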